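/- arXiv:2406.11878 — 4 statements merged into one kernel-verified Lean document; each statement's English description precedes it below -/
import Mathlib

section
/- The map from SU(2) to the 2-sphere S² ⊂ ℝ × ℂ sending R(rz, v) (with r ≥ 0, z ∈ S¹, r² + |v|² = 1) to (1 - 2r², 2r·z·v) is well-defined and constant on right cosets of the circle subgroup S = {d(z) = diag(conj(z), z) : z ∈ S¹}, and induces a bijection SU(2)/S ≅ S². -/
open Matrix

lemma su2_struct (A : Matrix (Fin 2) (Fin 2) ℂ)
    (hA : A ∈ Matrix.specialUnitaryGroup (Fin 2) ℂ) :
    A 1 1 = (starRingEnd ℂ) (A 0 0) ∧ A 1 0 = -(starRingEnd ℂ) (A 0 1) ∧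
      ‖A 0 0‖ ^ 2 + ‖A 0 1‖ ^ 2 = 1 := by
  obtain ⟨hu, hd⟩ := Matrix.mem_specialUnitaryGroup_iff.mp hA
  have hd' : A.det = 1 := hd
  have h1 : A⁻¹ = star A := inv_eq_right_inv hu.2
  have h2 : A⁻¹ = A.adjugate := by
    rw [Matrix.inv_def, hd']
    simp
  have h3 : star A = A.adjugate := h1 ▸ h2
  have hA2 : A = !![A 0 0, A 0 1; A 1 0, A 1 1] := Matrix.etaExpand_eq A |>.symm
  rw [hA2] at h3
  rw [Matrix.adjugate_fin_two] at h3
  have e00 := congrFun (congrFun h3 0) 0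
  have e01 := congrFun (congrFun h3 0) 1
  simp [Matrix.star_apply] at e00 e01
  refine ⟨e00.symm, ?_, ?_⟩
  · have := congrArg (starRingEnd ℂ) e01
    simpa using this
  · have h10 : A 1 0 = -(starRingEnd ℂ) (A 0 1) := by
      have := congrArg (starRingEnd ℂ) e01
      simpa using this
    have hdet := A.det_fin_two
    rw [hd', ← e00, h10] at hdet
    have : A 0 0 * (starRingEnd ℂ) (A 0 0) + A 0 1 * (starRingEnd ℂ) (A 0 1) = 1 := by
      linear_combination -hdet
    rw [Complex.mul_conj', Complex.mul_conj'] at this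
    exact_mod_cast this

lemma su2_mk_mem (a b : ℂ) (h : ‖a‖ ^ 2 + ‖b‖ ^ 2 = 1) :
    !![a, b; -(starRingEnd ℂ) b, (starRingEnd ℂ) a] ∈
      Matrix.specialUnitaryGroup (Fin 2) ℂ := by
  have hc : a * (starRingEnd ℂ) a + b * (starRingEnd ℂ) b = 1 := by
    rw [Complex.mul_conj', Complex.mul_conj']
    exact_mod_cast h
  constructor
  · constructor <;>
    · ext i j
      fin_cases i <;> fin_cases j <;>
        simp [Matrix.mul_apply, Fin.sum_univ_two, Matrix.star_apply, Matrix.one_apply] <;>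
        ring_nf <;>
        linear_combination hc
  · show Matrix.det (!![a, b; -(starRingEnd ℂ) b, (starRingEnd ℂ) a]) = 1
    rw [Matrix.det_fin_two_of]
    linear_combination hc

lemma sq_eq_of_nonneg {s t : ℝ} (hs : 0 ≤ s) (ht : 0 ≤ t) (h : s ^ 2 = t ^ 2) : s = t := by
  rw [← Real.sqrt_sq hs, ← Real.sqrt_sq ht, h]

noncomputable def su2toSphere (A : Matrix.specialUnitaryGroup (Fin 2) ℂ) :
    {p : ℝ × ℂ // p.1 ^ 2 + ‖p.2‖ ^ 2 = 1} :=
  ⟨(1 - 2 * ‖(A : Matrix (Fin 2) (Fin 2) ℂ) 0 0‖ ^ 2,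
    2 * (A : Matrix (Fin 2) (Fin 2) ℂ) 0 0 * (A : Matrix (Fin 2) (Fin 2) ℂ) 0 1), by
    have h := (su2_struct A.1 A.2).2.2
    have h2 : ‖2 * (A : Matrix (Fin 2) (Fin 2) ℂ) 0 0 * (A : Matrix (Fin 2) (Fin 2) ℂ) 0 1‖ =
        2 * ‖(A : Matrix (Fin 2) (Fin 2) ℂ) 0 0‖ * ‖(A : Matrix (Fin 2) (Fin 2) ℂ) 0 1‖ := by
      simp [norm_mul]
    simp only [h2]
    nlinarith [h]⟩

/-- The map SU(2) → S² ⊂ ℝ × ℂ sending R(rz, v) to (1 - 2r², 2rzv)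
is well-defined, constant on right cosets of S = {diag(conj z, z)}, and induces a
bijection SU(2)/S ≅ S². -/
theorem su2_mod_circle_equiv_sphere :
    ∃ f : Matrix.specialUnitaryGroup (Fin 2) ℂ → {p : ℝ × ℂ // p.1 ^ 2 + ‖p.2‖ ^ 2 = 1},
      (∀ (A : Matrix.specialUnitaryGroup (Fin 2) ℂ) (r : ℝ) (z v : ℂ),
          0 ≤ r → ‖z‖ = 1 → r ^ 2 + ‖v‖ ^ 2 = 1 →
          (A : Matrix (Fin 2) (Fin 2) ℂ) =
            !![(r : ℂ) * z, v; -((starRingEnd ℂ) v), (r : ℂ) * (starRingEnd ℂ) z] →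
          (f A : ℝ × ℂ) = (1 - 2 * r ^ 2, 2 * (r : ℂ) * z * v)) ∧
      (∀ A B : Matrix.specialUnitaryGroup (Fin 2) ℂ, ∀ z : ℂ, ‖z‖ = 1 →
          (B : Matrix (Fin 2) (Fin 2) ℂ) =
            (A : Matrix (Fin 2) (Fin 2) ℂ) * !![(starRingEnd ℂ) z, 0; 0, z] →
          f B = f A) ∧
      Function.Surjective f ∧
      (∀ A B : Matrix.specialUnitaryGroup (Fin 2) ℂ, f A = f B →
          ∃ z : ℂ, ‖z‖ = 1 ∧
            (B : Matrix (Fin 2) (Fin 2) ℂ) =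
              (A : Matrix (Fin 2) (Fin 2) ℂ) * !![(starRingEnd ℂ) z, 0; 0, z]) := by
  refine ⟨su2toSphere, ?_, ?_, ?_, ?_⟩
  · -- well-definedness
    intro A r z v hr hz hrv hAeq
    have h00 : (A : Matrix (Fin 2) (Fin 2) ℂ) 0 0 = (r : ℂ) * z := by rw [hAeq]; simp
    have h01 : (A : Matrix (Fin 2) (Fin 2) ℂ) 0 1 = v := by rw [hAeq]; simp
    have hn : ‖(r : ℂ) * z‖ = r := by
      rw [norm_mul, hz, Complex.norm_real]
      simp [abs_of_nonneg hr]
    show (1 - 2 * ‖(A : Matrix (Fin 2) (Fin 2) ℂ) 0 0‖ ^ 2,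
        2 * (A : Matrix (Fin 2) (Fin 2) ℂ) 0 0 * (A : Matrix (Fin 2) (Fin 2) ℂ) 0 1) = _
    rw [h00, h01, hn]
    exact Prod.ext rfl (by ring)
  · -- constant on cosets
    intro A B z hz hBeq
    have hzz : z * (starRingEnd ℂ) z = 1 := by
      rw [Complex.mul_conj']
      rw [hz]
      norm_num
    have h00 : (B : Matrix (Fin 2) (Fin 2) ℂ) 0 0 =
        (A : Matrix (Fin 2) (Fin 2) ℂ) 0 0 * (starRingEnd ℂ) z := by
      rw [hBeq]; simp [Matrix.mul_apply, Fin.sum_univ_two]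
    have h01 : (B : Matrix (Fin 2) (Fin 2) ℂ) 0 1 =
        (A : Matrix (Fin 2) (Fin 2) ℂ) 0 1 * z := by
      rw [hBeq]; simp [Matrix.mul_apply, Fin.sum_univ_two]
    apply Subtype.ext
    show (1 - 2 * ‖(B : Matrix (Fin 2) (Fin 2) ℂ) 0 0‖ ^ 2,
        2 * (B : Matrix (Fin 2) (Fin 2) ℂ) 0 0 * (B : Matrix (Fin 2) (Fin 2) ℂ) 0 1) =
      (1 - 2 * ‖(A : Matrix (Fin 2) (Fin 2) ℂ) 0 0‖ ^ 2,
        2 * (A : Matrix (Fin 2) (Fin 2) ℂ) 0 0 * (A : Matrix (Fin 2) (Fin 2) ℂ) 0 1)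
    rw [h00, h01]
    refine Prod.ext ?_ ?_
    · simp [norm_mul, RCLike.norm_conj, hz]
    · show 2 * ((A : Matrix (Fin 2) (Fin 2) ℂ) 0 0 * (starRingEnd ℂ) z) *
          ((A : Matrix (Fin 2) (Fin 2) ℂ) 0 1 * z) = _
      linear_combination (2 * (A : Matrix (Fin 2) (Fin 2) ℂ) 0 0 *
        (A : Matrix (Fin 2) (Fin 2) ℂ) 0 1) * hzz
  · -- surjectivity
    rintro ⟨⟨x, w⟩, hp⟩
    simp only at hp
    by_cases hx : x = 1
    · -- then w = 0
      have hw : w = 0 := by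
        have : ‖w‖ ^ 2 = 0 := by rw [hx] at hp; nlinarith
        simpa using pow_eq_zero_iff (n := 2) (by norm_num) |>.mp this
      refine ⟨⟨!![0, 1; -1, 0], by simpa using su2_mk_mem 0 1 (by norm_num)⟩, ?_⟩
      apply Subtype.ext
      show (1 - 2 * ‖(!![0, 1; -1, 0] : Matrix (Fin 2) (Fin 2) ℂ) 0 0‖ ^ 2,
          2 * (!![0, 1; -1, 0] : Matrix (Fin 2) (Fin 2) ℂ) 0 0 *
            (!![0, 1; -1, 0] : Matrix (Fin 2) (Fin 2) ℂ) 0 1) = (x, w)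
      simp [hx, hw]
    · have hxle : x ≤ 1 := by nlinarith [sq_nonneg (x - 1), sq_nonneg ‖w‖]
      have hx1 : x < 1 := lt_of_le_of_ne hxle hx
      set r : ℝ := Real.sqrt ((1 - x) / 2) with hr_def
      have hr_pos : 0 < r := Real.sqrt_pos.mpr (by linarith)
      have hr2 : r ^ 2 = (1 - x) / 2 := Real.sq_sqrt (by linarith)
      set a : ℂ := (r : ℂ)
      set b : ℂ := w / (2 * (r : ℂ))
      have hra : ‖a‖ = r := by simp [a, Complex.norm_real, abs_of_pos hr_pos]
      have hrb : ‖b‖ ^ 2 = (1 + x) / 2 := by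
        have h2r : ((2 : ℂ) * (r : ℂ)) ≠ 0 := by
          simp [Complex.ofReal_ne_zero]
          exact ne_of_gt hr_pos
        have : ‖b‖ = ‖w‖ / (2 * r) := by
          rw [show b = w / (2 * (r : ℂ)) from rfl, norm_div]
          congr 1
          rw [norm_mul, Complex.norm_real]
          simp [abs_of_pos hr_pos]
        rw [this, div_pow]
        have hw2 : ‖w‖ ^ 2 = 1 - x ^ 2 := by linarith
        have hne : (1 : ℝ) - x ≠ 0 := by intro h; apply hx; linarith
        rw [hw2, mul_pow, hr2]
        field_simp
        ring
      have hab : ‖a‖ ^ 2 + ‖b‖ ^ 2 = 1 := by rw [hra, hrb, hr2]; ring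
      refine ⟨⟨!![a, b; -(starRingEnd ℂ) b, (starRingEnd ℂ) a], su2_mk_mem a b hab⟩, ?_⟩
      apply Subtype.ext
      show (1 - 2 * ‖(!![a, b; -(starRingEnd ℂ) b, (starRingEnd ℂ) a] :
            Matrix (Fin 2) (Fin 2) ℂ) 0 0‖ ^ 2,
          2 * (!![a, b; -(starRingEnd ℂ) b, (starRingEnd ℂ) a] :
            Matrix (Fin 2) (Fin 2) ℂ) 0 0 *
          (!![a, b; -(starRingEnd ℂ) b, (starRingEnd ℂ) a] :
            Matrix (Fin 2) (Fin 2) ℂ) 0 1) = (x, w)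
      have e0 : (!![a, b; -(starRingEnd ℂ) b, (starRingEnd ℂ) a] :
          Matrix (Fin 2) (Fin 2) ℂ) 0 0 = a := by simp
      have e1 : (!![a, b; -(starRingEnd ℂ) b, (starRingEnd ℂ) a] :
          Matrix (Fin 2) (Fin 2) ℂ) 0 1 = b := by simp
      rw [e0, e1, hra]
      refine Prod.ext ?_ ?_
      · show 1 - 2 * r ^ 2 = x
        rw [hr2]; ring
      · show 2 * a * b = w
        have h2r : ((r : ℂ)) ≠ 0 := Complex.ofReal_ne_zero.mpr (ne_of_gt hr_pos)
        show 2 * (r : ℂ) * (w / (2 * (r : ℂ))) = w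
        field_simp
  · -- injectivity up to coset
    intro A B hfAB
    set a := (A : Matrix (Fin 2) (Fin 2) ℂ) 0 0 with ha_def
    set b := (A : Matrix (Fin 2) (Fin 2) ℂ) 0 1 with hb_def
    set a' := (B : Matrix (Fin 2) (Fin 2) ℂ) 0 0 with ha'_def
    set b' := (B : Matrix (Fin 2) (Fin 2) ℂ) 0 1 with hb'_def
    have hA := su2_struct A.1 A.2
    have hB := su2_struct B.1 B.2
    have hpair : ((1 - 2 * ‖a‖ ^ 2 : ℝ), 2 * a * b) = ((1 - 2 * ‖a'‖ ^ 2 : ℝ), 2 * a' * b') :=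
      congrArg Subtype.val hfAB
    have hnorm : ‖a‖ = ‖a'‖ := by
      have h1 : (1 - 2 * ‖a‖ ^ 2 : ℝ) = 1 - 2 * ‖a'‖ ^ 2 := congrArg Prod.fst hpair
      have h2 : ‖a‖ ^ 2 = ‖a'‖ ^ 2 := by linarith
      exact sq_eq_of_nonneg (norm_nonneg _) (norm_nonneg _) h2
    have hprod : a * b = a' * b' := by
      have := congrArg Prod.snd hpair
      simp only at this
      linear_combination this / 2
    by_cases ha0 : a' = 0
    · have haz : a = 0 := by
        have : ‖a‖ = 0 := by rw [hnorm, ha0, norm_zero]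
        exact norm_eq_zero.mp this
      have hbn : ‖b‖ = 1 := by
        have h1 := hA.2.2
        rw [← ha_def, ← hb_def, haz, norm_zero] at h1
        refine sq_eq_of_nonneg (norm_nonneg b) zero_le_one ?_
        rw [one_pow]; linarith
      have hbn' : ‖b'‖ = 1 := by
        have h1 := hB.2.2
        rw [← ha'_def, ← hb'_def, ha0, norm_zero] at h1
        refine sq_eq_of_nonneg (norm_nonneg b') zero_le_one ?_
        rw [one_pow]; linarith
      have hbb : b * (starRingEnd ℂ) b = 1 := by
        rw [Complex.mul_conj', hbn]; norm_num
      refine ⟨(starRingEnd ℂ) b * b', ?_, ?_⟩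
      · rw [norm_mul, RCLike.norm_conj, hbn, hbn']; ring
      · have hAeta : (A : Matrix (Fin 2) (Fin 2) ℂ) =
            !![a, b; -(starRingEnd ℂ) b, (starRingEnd ℂ) a] := by
          rw [Matrix.eta_fin_two (A : Matrix (Fin 2) (Fin 2) ℂ)]
          rw [hA.1, hA.2.1]
        have hBeta : (B : Matrix (Fin 2) (Fin 2) ℂ) =
            !![a', b'; -(starRingEnd ℂ) b', (starRingEnd ℂ) a'] := by
          rw [Matrix.eta_fin_two (B : Matrix (Fin 2) (Fin 2) ℂ)]
          rw [hB.1, hB.2.1]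
        rw [hAeta, hBeta, Matrix.mul_fin_two]
        have g00 : a' = a * (starRingEnd ℂ) ((starRingEnd ℂ) b * b') + b * 0 := by
          rw [ha0, haz]; ring
        have g01 : b' = a * 0 + b * ((starRingEnd ℂ) b * b') := by
          linear_combination -b' * hbb
        have g10 : -(starRingEnd ℂ) b' =
            -(starRingEnd ℂ) b * (starRingEnd ℂ) ((starRingEnd ℂ) b * b') +
              (starRingEnd ℂ) a * 0 := by
          simp only [_root_.map_mul, Complex.conj_conj]
          linear_combination (starRingEnd ℂ) b' * hbb
        have g11 : (starRingEnd ℂ) a' =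
            -(starRingEnd ℂ) b * 0 + (starRingEnd ℂ) a * ((starRingEnd ℂ) b * b') := by
          rw [ha0, haz]; simp
        ext i j
        fin_cases i <;> fin_cases j
        · exact g00
        · exact g01
        · exact g10
        · exact g11
    · have ha0' : a ≠ 0 := by
        intro h
        apply ha0
        have : ‖a'‖ = 0 := by rw [← hnorm, h, norm_zero]
        exact norm_eq_zero.mp this
      have haa' : a' * (starRingEnd ℂ) a' = a * (starRingEnd ℂ) a := by
        rw [Complex.mul_conj', Complex.mul_conj', hnorm]
      have ha'c : (starRingEnd ℂ) a' ≠ 0 := by simp [ha0]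
      have hac : (starRingEnd ℂ) a ≠ 0 := by simp [ha0']
      refine ⟨a / a', ?_, ?_⟩
      · rw [norm_div, ← hnorm, div_self (norm_ne_zero_iff.mpr ha0')]
      · have hAeta : (A : Matrix (Fin 2) (Fin 2) ℂ) =
            !![a, b; -(starRingEnd ℂ) b, (starRingEnd ℂ) a] := by
          rw [Matrix.eta_fin_two (A : Matrix (Fin 2) (Fin 2) ℂ)]
          rw [hA.1, hA.2.1]
        have hBeta : (B : Matrix (Fin 2) (Fin 2) ℂ) =
            !![a', b'; -(starRingEnd ℂ) b', (starRingEnd ℂ) a'] := by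
          rw [Matrix.eta_fin_two (B : Matrix (Fin 2) (Fin 2) ℂ)]
          rw [hB.1, hB.2.1]
        rw [hAeta, hBeta, Matrix.mul_fin_two]
        have g00 : a' = a * (starRingEnd ℂ) (a / a') + b * 0 := by
          rw [map_div₀]
          field_simp
          linear_combination haa'
        have g01 : b' = a * 0 + b * (a / a') := by
          field_simp
          linear_combination -hprod
        have g10 : -(starRingEnd ℂ) b' =
            -(starRingEnd ℂ) b * (starRingEnd ℂ) (a / a') + (starRingEnd ℂ) a * 0 := by
          rw [map_div₀]
          have hcp : (starRingEnd ℂ) a * (starRingEnd ℂ) b =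
              (starRingEnd ℂ) a' * (starRingEnd ℂ) b' := by
            rw [← _root_.map_mul, ← _root_.map_mul, hprod]
          field_simp
          linear_combination hcp
        have g11 : (starRingEnd ℂ) a' =
            -(starRingEnd ℂ) b * 0 + (starRingEnd ℂ) a * (a / a') := by
          field_simp
          linear_combination haa'
        ext i j
        fin_cases i <;> fin_cases j
        · exact g00
        · exact g01
        · exact g10
        · exact g11
end

section
/- Fix m ≥ 3, 0 ≤ j ≤ m-2, m_j = m-j-1. Let P = ∏_{i=1}^{m_j} R_{i;j}(r_i z, v_i) where z ∈ S¹, r_i ≥ 0, r_i² + |v_i|² = 1, and the product is taken in increasing order of i. Then the (j+1+s, j+1) entries of P (the first column of the nontrivial block) are: entry s = 0 equals r_1⋯r_{m_j} z^{m_j}; entry s with 1 ≤ s ≤ m_j - 1 equals -r_{s+1}⋯r_{m_j} z^{m_j - s} conj(v_s); and entry s = m_j equals -conj(v_{m_j}). -/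
/-
Right multiplication by `R_{k+1;j}(a_k, v_k)` replaces column `j` by
`a_k • (column j) - conj v_k • (column j+k+1)`. The first `k` factors only touch indices
`≤ j + k`, so column `j+k+1` of their product is still a standard basis vector. Hence each new
factor scales the column built so far by `a_k` and appends `-conj v_k` in row `j+k+1`; the three
formulas follow by induction on the number of factors.
-/

open Matrix

/-- The matrix R_{i;j}(a, v) ∈ SU(m): the identity matrix except in rows/columns
j and j+i (0-indexed), where [[a, v], [-conj v, conj a]] is embedded. -/
noncomputable def Rblock (m j i : ℕ) (a v : ℂ) : Matrix (Fin m) (Fin m) ℂ :=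
  Matrix.of fun p q =>
    if (p : ℕ) = j ∧ (q : ℕ) = j then a
    else if (p : ℕ) = j ∧ (q : ℕ) = j + i then v
    else if (p : ℕ) = j + i ∧ (q : ℕ) = j then -((starRingEnd ℂ) v)
    else if (p : ℕ) = j + i ∧ (q : ℕ) = j + i then (starRingEnd ℂ) a
    else if p = q then 1 else 0

open Finset

theorem Matrix.list_prod_apply_eq_one_apply {n R : Type*} [Fintype n] [DecidableEq n]
    [Semiring R] {L : List (Matrix n n R)} {q : n}
    (h : ∀ M ∈ L, ∀ p, M p q = (1 : Matrix n n R) p q) (p : n) :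
    L.prod p q = (1 : Matrix n n R) p q := by
  induction L generalizing p with
  | nil => rfl
  | cons M L ih =>
    have hL : ∀ x, L.prod x q = (1 : Matrix n n R) x q :=
      ih fun N hN => h N (List.mem_cons_of_mem M hN)
    rw [List.prod_cons, mul_apply]
    simp only [hL, ← mul_apply, mul_one]
    exact h M List.mem_cons_self p

section Rblock

variable {m j i : ℕ} {a v : ℂ}

theorem Rblock_apply_of_col_ne {p q : Fin m} (hq : (q : ℕ) ≠ j) (hq' : (q : ℕ) ≠ j + i) :
    Rblock m j i a v p q = (1 : Matrix (Fin m) (Fin m) ℂ) p q := by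
  simp [Rblock, one_apply, hq, hq']

theorem Rblock_apply_first_col (hj : j < m) (p : Fin m) :
    Rblock m j i a v p ⟨j, hj⟩ =
      if (p : ℕ) = j then a else if (p : ℕ) = j + i then -starRingEnd ℂ v else 0 := by
  simp only [Rblock, of_apply, Fin.ext_iff, and_true]
  split_ifs <;> first | rfl | omega

end Rblock

noncomputable def RblockProd (m j : ℕ) (a v : ℕ → ℂ) (k : ℕ) :
    Matrix (Fin m) (Fin m) ℂ :=
  ((List.range k).map fun i => Rblock m j (i + 1) (a i) (v i)).prod

namespace RblockProd

variable {m j k : ℕ} {a v : ℕ → ℂ}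

theorem succ :
    RblockProd m j a v (k + 1) = RblockProd m j a v k * Rblock m j (k + 1) (a k) (v k) := by
  simp [RblockProd, List.range_succ]

theorem apply_eq_one_apply_of_lt {q : Fin m} (hq : j + k < q) (p : Fin m) :
    RblockProd m j a v k p q = (1 : Matrix (Fin m) (Fin m) ℂ) p q :=
  Matrix.list_prod_apply_eq_one_apply (by
    simp only [List.mem_map, List.mem_range]
    rintro _ ⟨i, hi, rfl⟩ p
    exact Rblock_apply_of_col_ne (by omega) (by omega)) p

theorem succ_apply_first_col (hj : j < m) (hk : j + (k + 1) < m) (p : Fin m) :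
    RblockProd m j a v (k + 1) p ⟨j, hj⟩ =
      a k * RblockProd m j a v k p ⟨j, hj⟩ -
        if (p : ℕ) = j + (k + 1) then starRingEnd ℂ (v k) else 0 := by
  have hne : (⟨j, hj⟩ : Fin m) ≠ ⟨j + (k + 1), hk⟩ := by simp [Fin.ext_iff]
  rw [succ, mul_apply, Fintype.sum_eq_add _ _ hne fun q hq => by
    rw [Rblock_apply_first_col, if_neg, if_neg, mul_zero]
    all_goals simp only [ne_eq, Fin.ext_iff] at hq; omega]
  have hfix : RblockProd m j a v k p ⟨j + (k + 1), hk⟩ =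
      if (p : ℕ) = j + (k + 1) then 1 else 0 := by
    rw [apply_eq_one_apply_of_lt (show j + k < ((⟨j + (k + 1), hk⟩ : Fin m) : ℕ) by simp)]
    simp only [one_apply, Fin.ext_iff]
  rw [Rblock_apply_first_col, Rblock_apply_first_col, hfix]
  simp [mul_comm, sub_eq_add_neg]

theorem apply_first_col_self (hk : j + k < m) :
    RblockProd m j a v k ⟨j, by omega⟩ ⟨j, by omega⟩ = ∏ i ∈ range k, a i := by
  induction k with
  | zero => simp [RblockProd]
  | succ k ih =>
    rw [succ_apply_first_col (by omega) hk, ih (by omega), if_neg (by simp), sub_zero,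
      prod_range_succ, mul_comm]

theorem apply_first_col_of_lt (hj : j < m) {p : Fin m} (hp : j + k < p) :
    RblockProd m j a v k p ⟨j, hj⟩ = 0 := by
  induction k with
  | zero => exact one_apply_ne (by simp [Fin.ext_iff]; omega)
  | succ k ih =>
    rw [succ_apply_first_col hj (by omega), ih (by omega), if_neg (by omega), mul_zero, sub_zero]

theorem apply_first_col_of_pos_of_le {s : ℕ} (hs : 0 < s) (hsk : s ≤ k) (hk : j + k < m) :
    RblockProd m j a v k ⟨j + s, by omega⟩ ⟨j, by omega⟩ =
      -((∏ i ∈ Ico s k, a i) * starRingEnd ℂ (v (s - 1))) := by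
  induction k, hsk using Nat.le_induction with
  | base =>
    obtain ⟨t, rfl⟩ := Nat.exists_eq_succ_of_ne_zero hs.ne'
    rw [succ_apply_first_col (by omega) hk, apply_first_col_of_lt (by omega) (by simp),
      if_pos rfl]
    simp
  | succ k hsk ih =>
    rw [succ_apply_first_col (by omega) hk, ih (by omega), if_neg (by simp; omega),
      prod_Ico_succ_top hsk]
    ring

end RblockProd

-- The paper's (r_i, v_i) is (r (i-1), v (i-1)).
/-- the first-column entries of the nontrivial block of
P = ∏_{i=1}^{m_j} R_{i;j}(r_i z, v_i) (product in increasing order of i).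
Here the parameters r, v are 0-indexed: the paper's (r_i, v_i) is (r (i-1), v (i-1)). -/
theorem prod_Rblock_first_column (m j : ℕ) (hm : 3 ≤ m) (hj : j ≤ m - 2)
    (z : ℂ) (r : ℕ → ℝ) (v : ℕ → ℂ) :
    (((List.range (m - j - 1)).map
          (fun i => Rblock m j (i + 1) ((r i : ℂ) * z) (v i))).prod
        ⟨j, by omega⟩ ⟨j, by omega⟩ =
      (∏ i ∈ Finset.range (m - j - 1), (r i : ℂ)) * z ^ (m - j - 1)) ∧
    (∀ (s : ℕ) (_hs1 : 1 ≤ s) (_hs2 : s ≤ m - j - 1 - 1),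
      ((List.range (m - j - 1)).map
          (fun i => Rblock m j (i + 1) ((r i : ℂ) * z) (v i))).prod
        ⟨j + s, by omega⟩ ⟨j, by omega⟩ =
      -((∏ i ∈ Finset.Ico s (m - j - 1), (r i : ℂ)) * z ^ (m - j - 1 - s) *
          (starRingEnd ℂ) (v (s - 1)))) ∧
    ((List.range (m - j - 1)).map
        (fun i => Rblock m j (i + 1) ((r i : ℂ) * z) (v i))).prod
      ⟨j + (m - j - 1), by omega⟩ ⟨j, by omega⟩ =
      -((starRingEnd ℂ) (v (m - j - 1 - 1))) := by
  have hk : j + (m - j - 1) < m := by omega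
  refine ⟨?_, fun s hs hsk => ?_, ?_⟩
  · have h := RblockProd.apply_first_col_self (a := fun i => (r i : ℂ) * z) (v := v) hk
    rwa [prod_mul_distrib, prod_const, card_range] at h
  · have h := RblockProd.apply_first_col_of_pos_of_le (a := fun i => (r i : ℂ) * z) (v := v) hs
      (by omega) hk
    rwa [prod_mul_distrib, prod_const, Nat.card_Ico] at h
  · have h := RblockProd.apply_first_col_of_pos_of_le (a := fun i => (r i : ℂ) * z) (v := v)
      (by omega) le_rfl hk
    rwa [Ico_self, prod_empty, one_mul] at h
end

section
/- Fix m ≥ 3, 0 ≤ j ≤ m-2, m_j = m-j-1, and let d_j(z) = diag(1, ..., 1 (j times), conj(z)^{m_j}, z, ..., z) ∈ SU(m) for z ∈ S¹. Then for r_i ≥ 0, v_i ∈ ℂ with r_i² + |v_i|² = 1: (∏_{i=1}^{m_j} R_{i;j}(r_i z, v_i)) · d_j(z) = ∏_{i=1}^{m_j} R_{i;j}(r_i, z^i v_i). -/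
open Matrix

/-- The diagonal matrix d_j(z) = diag(1, ..., 1 (j times), conj(z)^{m-j-1}, z, ..., z). -/
noncomputable def dj (m j : ℕ) (z : ℂ) : Matrix (Fin m) (Fin m) ℂ :=
  Matrix.diagonal fun p =>
    if (p : ℕ) < j then 1
    else if (p : ℕ) = j then ((starRingEnd ℂ) z) ^ (m - j - 1)
    else z

noncomputable def Dmat (m j k : ℕ) (z : ℂ) : Matrix (Fin m) (Fin m) ℂ :=
  Matrix.diagonal fun p =>
    if (p : ℕ) < j then 1
    else if (p : ℕ) = j then ((starRingEnd ℂ) z) ^ k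
    else if (p : ℕ) ≤ j + k then z else 1

lemma step (m j k : ℕ) (hk : 1 ≤ k) (hjk : j + k < m) (z : ℂ) (hz : ‖z‖ = 1)
    (r : ℝ) (v : ℂ) :
    Rblock m j k ((r : ℂ) * z) v * Dmat m j k z
      = Dmat m j (k - 1) z * Rblock m j k (r : ℂ) (z ^ k * v) := by
  have hz1 : z * (starRingEnd ℂ) z = 1 := by
    rw [Complex.mul_conj]; norm_cast
    rw [Complex.normSq_eq_norm_sq, hz]; norm_num
  have hzk : ∀ n : ℕ, z ^ (n+1) * ((starRingEnd ℂ) z) ^ (n+1) = 1 := by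
    intro n; rw [← mul_pow, hz1, one_pow]
  obtain ⟨k, rfl⟩ : ∃ k', k = k' + 1 := ⟨k - 1, by omega⟩
  ext p q
  simp only [Rblock, Dmat, Matrix.mul_diagonal, Matrix.diagonal_mul, Matrix.of_apply,
    Nat.add_sub_cancel]
  have hpq : (p = q) ↔ ((p:ℕ) = (q:ℕ)) := Fin.ext_iff
  have h1 : z * ((starRingEnd ℂ) z) ^ (k+1) = ((starRingEnd ℂ) z) ^ k := by
    linear_combination ((starRingEnd ℂ) z) ^ k * hz1
  have h2 : ((starRingEnd ℂ) z) ^ k * z ^ (k+1) = z := by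
    have f : (z * (starRingEnd ℂ) z) ^ k = 1 := by rw [hz1, one_pow]
    linear_combination z * f
  have f0 : z ^ k * ((starRingEnd ℂ) z) ^ k = 1 := by
    rw [← mul_pow, hz1, one_pow]
  split_ifs
  all_goals try rfl
  all_goals try omega
  all_goals try simp only [_root_.map_mul, _root_.map_pow, Complex.conj_ofReal]
  all_goals try ring
  all_goals first
    | (linear_combination (r : ℂ) * h1)
    | (linear_combination v * h2)
    | (linear_combination ((r : ℂ) * ((starRingEnd ℂ) z) ^ k) * hz1)
    | (linear_combination (-(v * z)) * f0)
    | (linear_combination (r : ℂ) * hz1)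

lemma Dmat_zero (m j : ℕ) (z : ℂ) : Dmat m j 0 z = 1 := by
  ext p q
  simp only [Dmat, Matrix.diagonal, Matrix.of_apply, Matrix.one_apply, pow_zero]
  by_cases h : p = q
  · subst h; simp only [if_pos rfl]; split_ifs <;> first | rfl | omega
  · simp [h]

lemma prod_aux (m j : ℕ) (z : ℂ) (hz : ‖z‖ = 1) (r : ℕ → ℝ) (v : ℕ → ℂ) :
    ∀ k, j + k < m →
      (((List.range k).map
          (fun i => Rblock m j (i + 1) ((r i : ℂ) * z) (v i))).prod) * Dmat m j k z =
      ((List.range k).map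
          (fun i => Rblock m j (i + 1) ((r i : ℂ)) (z ^ (i + 1) * v i))).prod := by
  intro k
  induction k with
  | zero => intro _; simp [Dmat_zero]
  | succ k ih =>
    intro hk
    rw [List.range_succ, List.map_append, List.map_append, List.prod_append,
      List.prod_append]
    simp only [List.map_cons, List.map_nil, List.prod_cons, List.prod_nil, mul_one]
    rw [mul_assoc, step m j (k+1) (by omega) (by omega) z hz (r k) (v k), ← mul_assoc,
      Nat.add_sub_cancel, ih (by omega)]

/-- (∏_{i=1}^{m_j} R_{i;j}(r_i z, v_i)) · d_j(z)
= ∏_{i=1}^{m_j} R_{i;j}(r_i, z^i v_i), products in increasing order of i.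
Parameters are 0-indexed: the paper's (r_i, v_i) is (r (i-1), v (i-1)). -/
theorem prod_Rblock_mul_dj (m j : ℕ) (hm : 3 ≤ m) (hj : j ≤ m - 2)
    (z : ℂ) (hz : ‖z‖ = 1) (r : ℕ → ℝ) (v : ℕ → ℂ)
    (hr : ∀ i, 0 ≤ r i) (hrv : ∀ i, (r i) ^ 2 + ‖v i‖ ^ 2 = 1) :
    (((List.range (m - j - 1)).map
          (fun i => Rblock m j (i + 1) ((r i : ℂ) * z) (v i))).prod) * dj m j z =
      ((List.range (m - j - 1)).map
          (fun i => Rblock m j (i + 1) ((r i : ℂ)) (z ^ (i + 1) * v i))).prod := by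
  have hd : dj m j z = Dmat m j (m - j - 1) z := by
    ext p q
    simp only [dj, Dmat, Matrix.diagonal, Matrix.of_apply]
    by_cases h : p = q
    · subst h
      have hp : (p : ℕ) < m := p.isLt
      simp only [if_pos rfl]
      split_ifs <;> first | rfl | omega
    · simp [h]
  rw [hd]
  exact prod_aux m j z hz r v (m - j - 1) (by omega)
end

section
/- Suppose r_s, r'_s ≥ 0 and w_s, w'_s ∈ ℂ satisfy r_s² + |w_s|² = 1 and r'_s² + |w'_s|² = 1 for 1 ≤ s ≤ N, with all r_s > 0 and all r'_s > 0. If r_1⋯r_N = r'_1⋯r'_N, and r_{s+1}⋯r_N · conj(w_s) = r'_{s+1}⋯r'_N · conj(w'_s) for 1 ≤ s ≤ N-1, and conj(w_N) = conj(w'_N), then r_s = r'_s and w_s = w'_s for all s. -/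
/-- the key injectivity step. If all r_s, r'_s > 0 with
r_s² + |w_s|² = 1, r'_s² + |w'_s|² = 1, and the first-column data agree
(product of all r's; the partial products times conjugated w's; and conj(w_N)),
then all parameters agree. Indexing runs over 1 ≤ s ≤ N. -/
theorem injectivity_step (N : ℕ) (hN : 1 ≤ N) (r r' : ℕ → ℝ) (w w' : ℕ → ℂ)
    (hr : ∀ s, 1 ≤ s → s ≤ N → 0 < r s) (hr' : ∀ s, 1 ≤ s → s ≤ N → 0 < r' s)
    (hrw : ∀ s, 1 ≤ s → s ≤ N → (r s) ^ 2 + ‖w s‖ ^ 2 = 1)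
    (hrw' : ∀ s, 1 ≤ s → s ≤ N → (r' s) ^ 2 + ‖w' s‖ ^ 2 = 1)
    (h0 : ∏ s ∈ Finset.Icc 1 N, r s = ∏ s ∈ Finset.Icc 1 N, r' s)
    (hmid : ∀ s, 1 ≤ s → s ≤ N - 1 →
      ((∏ t ∈ Finset.Icc (s + 1) N, r t : ℝ) : ℂ) * (starRingEnd ℂ) (w s) =
        ((∏ t ∈ Finset.Icc (s + 1) N, r' t : ℝ) : ℂ) * (starRingEnd ℂ) (w' s))
    (hN' : (starRingEnd ℂ) (w N) = (starRingEnd ℂ) (w' N)) :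
    ∀ s, 1 ≤ s → s ≤ N → r s = r' s ∧ w s = w' s := by
  -- positivity of partial products
  have hPpos : ∀ s, 1 ≤ s → 0 < ∏ t ∈ Finset.Icc s N, r t := by
    intro s hs
    apply Finset.prod_pos
    intro i hi
    simp only [Finset.mem_Icc] at hi
    exact hr i (by omega) hi.2
  have hPpos' : ∀ s, 1 ≤ s → 0 < ∏ t ∈ Finset.Icc s N, r' t := by
    intro s hs
    apply Finset.prod_pos
    intro i hi
    simp only [Finset.mem_Icc] at hi
    exact hr' i (by omega) hi.2
  -- product splitting
  have hsplit : ∀ (f : ℕ → ℝ) s, s ≤ N →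
      (∏ t ∈ Finset.Icc s N, f t) = f s * ∏ t ∈ Finset.Icc (s+1) N, f t := by
    intro f s h2
    rw [← Finset.Ico_add_one_right_eq_Icc, ← Finset.Ico_add_one_right_eq_Icc,
      Finset.prod_eq_prod_Ico_succ_bot (by omega)]
  -- partial products agree
  have key : ∀ s, 1 ≤ s → s ≤ N + 1 →
      (∏ t ∈ Finset.Icc s N, r t) = ∏ t ∈ Finset.Icc s N, r' t := by
    intro s
    induction s with
    | zero => omega
    | succ n ih =>
      intro h1 h2
      rcases Nat.eq_or_lt_of_le h1 with h | h
      · simpa [← h] using h0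
      · have hn1 : 1 ≤ n := by omega
        have hnN : n ≤ N := by omega
        have hprev := ih hn1 (by omega)
        rcases Nat.eq_or_lt_of_le hnN with hnN' | hnN'
        · subst hnN'
          simp [Finset.Icc_eq_empty_of_lt (Nat.lt_succ_self n)]
        · have hm := hmid n hn1 (by omega)
          have p1 := hPpos (n+1) (by omega)
          have p2 := hPpos' (n+1) (by omega)
          set Q := ∏ t ∈ Finset.Icc (n+1) N, r t with hQ
          set Q' := ∏ t ∈ Finset.Icc (n+1) N, r' t with hQ'
          have hnorm : Q * ‖w n‖ = Q' * ‖w' n‖ := by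
            have h := congrArg (fun z : ℂ => ‖z‖) hm
            simp only [norm_mul, Complex.norm_real, Complex.norm_conj, Real.norm_eq_abs,
              abs_of_pos p1, abs_of_pos p2] at h
            simpa using h
          have e1 := hsplit r n hnN
          have e2 := hsplit r' n hnN
          have q1 := hrw n hn1 hnN
          have q2 := hrw' n hn1 hnN
          have a1 : Q^2 = (∏ t ∈ Finset.Icc n N, r t)^2 + (Q * ‖w n‖)^2 := by
            rw [e1]; linear_combination (-Q^2) * q1
          have a2 : Q'^2 = (∏ t ∈ Finset.Icc n N, r' t)^2 + (Q' * ‖w' n‖)^2 := by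
            rw [e2]; linear_combination (-Q'^2) * q2
          have hp2 : (∏ t ∈ Finset.Icc n N, r t)^2 = (∏ t ∈ Finset.Icc n N, r' t)^2 := by
            rw [hprev]
          have hw2 : (Q * ‖w n‖)^2 = (Q' * ‖w' n‖)^2 := by rw [hnorm]
          have hsq : Q^2 = Q'^2 := by linarith
          nlinarith [p1, p2, hsq]
  -- conclude
  intro s h1 h2
  have hP := key s h1 (by omega)
  have hP1 := key (s+1) (by omega) (by omega)
  have e1 := hsplit r s h2
  have e2 := hsplit r' s h2
  have p1 := hPpos (s+1) (by omega)
  have hrs : r s = r' s := by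
    have h : r s * (∏ t ∈ Finset.Icc (s+1) N, r t) =
        r' s * (∏ t ∈ Finset.Icc (s+1) N, r t) := by
      rw [← e1, hP, e2, hP1]
    exact mul_right_cancel₀ (ne_of_gt p1) h
  refine ⟨hrs, ?_⟩
  rcases Nat.eq_or_lt_of_le h2 with hsN | hsN
  · subst hsN
    exact (starRingEnd ℂ).injective hN'
  · have hm := hmid s h1 (by omega)
    rw [← hP1] at hm
    have hc : (starRingEnd ℂ) (w s) = (starRingEnd ℂ) (w' s) :=
      mul_left_cancel₀ (by exact_mod_cast ne_of_gt p1) hm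
    exact (starRingEnd ℂ).injective hc
end
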